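/- In the first-last conformant bribery construction: starting from the first-last conformant manipulation instance built from an exact perfect bipartite matching instance (bipartite graph G on parts of size n, red edges E', parameter k), add two fresh candidates r and r̂, add n(n+1)+k voters voting r first and r̂ last (r > ⋯ > r̂), and set the bribe limit to n(n+1)+k. Then p can be made a first-last winner by a conformant bribery of at most n(n+1)+k voters if and only if G has a perfect matching with exactly k red edges; moreover, any successful bribery must change exactly the n(n+1)+k added r-voters. -/

import Mathlib

/-- Candidates of the underlying manipulation construction: `inl i` is
`a_i ∈ A`, `inr (inl j)` is `b_j ∈ B`, `inr (inr (inl ((i,j), t)))` is the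
dummy `d_{t+1}^{ij}`, and `inr (inr (inr ()))` is `p`. -/
abbrev Cand14 (n : ℕ) :=
  Fin n ⊕ Fin n ⊕ (Fin n × Fin n) × Fin (n + 1) ⊕ Unit

/-- Candidates of the bribery construction: the old candidates plus two fresh
candidates `r = inr true` and `r̂ = inr false`. -/
abbrev Cand18 (n : ℕ) := Cand14 n ⊕ Bool

/-- Since first-last only consumes the top and bottom candidates of each
vote, a vote is modeled as a pair (top candidate, bottom candidate). -/
abbrev Vote18 (n : ℕ) := Cand18 n × Cand18 n

instance cand18DecEq (n : ℕ) : DecidableEq (Cand18 n) :=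
  fun a b => instDecidableEqSum a b

def aC {n : ℕ} (i : Fin n) : Cand18 n := Sum.inl (Sum.inl i)
def bC {n : ℕ} (j : Fin n) : Cand18 n := Sum.inl (Sum.inr (Sum.inl j))
def dC {n : ℕ} (e : Fin n × Fin n) (t : Fin (n + 1)) : Cand18 n :=
  Sum.inl (Sum.inr (Sum.inr (Sum.inl (e, t))))
def pC (n : ℕ) : Cand18 n := Sum.inl (Sum.inr (Sum.inr (Sum.inr ())))
def rC (n : ℕ) : Cand18 n := Sum.inr true
def rhatC (n : ℕ) : Cand18 n := Sum.inr false

/-- The chain of `n + 3` voters for a red edge `e = (i, j)`. -/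
def redChain {n : ℕ} (e : Fin n × Fin n) : Multiset (Vote18 n) :=
  {(bC e.2, dC e 0)} +
    (Finset.univ : Finset (Fin n)).val.map
      (fun t => (dC e t.castSucc, dC e t.succ)) +
    {(dC e (Fin.last n), aC e.1), (aC e.1, bC e.2)}

/-- The chain of `n + 2` voters for a non-red edge `e = (i, j)`. -/
def plainChain {n : ℕ} (e : Fin n × Fin n) : Multiset (Vote18 n) :=
  {(bC e.2, dC e 0)} +
    ((Finset.univ.filter (fun t : Fin n => t.1 + 1 < n)).val.map
      (fun t => (dC e t.castSucc, dC e t.succ))) +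
    {(dC e ⟨n - 1, by omega⟩, aC e.1), (aC e.1, bC e.2)}

/-- The votes of the bribery construction: the votes of the manipulation
construction (vertex voters and edge chains) plus `n(n+1) + k` voters voting
`r > ⋯ > r̂`. -/
def votes18 {n : ℕ} (E E' : Finset (Fin n × Fin n)) (k : ℕ) :
    Multiset (Vote18 n) :=
  (Finset.univ : Finset (Fin n)).val.map (fun i => (aC i, bC i)) +
    E.val.bind (fun e => if e ∈ E' then redChain e else plainChain e) +
    Multiset.replicate (n * (n + 1) + k) (rC n, rhatC n)

/-- The first-last score of candidate `c`. -/
def flScore18 {n : ℕ} (V : Multiset (Vote18 n)) (c : Cand18 n) : ℤ :=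
  (V.countP (fun v => v.1 = c) : ℤ) - (V.countP (fun v => v.2 = c) : ℤ)

/-!
A conformant vote never mentions `p`, so `p` scores `0`; as first-last scores always sum to `0`,
`p` wins exactly when every score is `0`. Only the vote `r > ⋯ > r̂` ranks `r` first, so all
`n(n+1)+k` copies of it must be bribed away, which uses up the budget, and the new votes `A`
must cancel the scores `+1` of the `a_i` and `-1` of the `b_j` left by the manipulation voters.

Zero scores at the dummies force each edge chain, without its closing vote `a_i > ⋯ > b_j`, to
occur in `A` a constant number `x_e` of times. With `S` the number of votes of `A` ranking some
`a_i` first, the scores of the `a_i` give `∑ x = S + n`, and counting `|A|` by top candidates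
gives `(n + 2) S + ∑_{red} x = k ≤ n + 1`. Hence `S = 0`, and `x` is the indicator of a perfect
matching with `k` red edges. Conversely the open chains of such a matching form a valid `A`.
-/

lemma Multiset.card_eq_sum_countP_fiberwise {α β : Type*} [Fintype β] [DecidableEq β]
    (f : α → β) (V : Multiset α) : Multiset.card V = ∑ b, V.countP (fun v => f v = b) := by
  rw [← Multiset.card_map f, ← Multiset.sum_count_eq_card (s := Finset.univ) (by simp)]
  simp [Multiset.count_map, Multiset.countP_eq_card_filter, eq_comm]

lemma Multiset.countP_eq_ite_count {α : Type*} [DecidableEq α] {A : Multiset α}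
    {P : α → Prop} [DecidablePred P] {Q : Prop} [Decidable Q] {u : α}
    (h : ∀ v ∈ A, P v ↔ Q ∧ v = u) : A.countP P = if Q then A.count u else 0 := by
  split_ifs with hQ
  · exact Multiset.countP_congr rfl fun v hv => by simp [h v hv, hQ, eq_comm]
  · exact Multiset.countP_eq_zero.2 fun v hv hP => hQ ((h v hv).1 hP).1

lemma Multiset.countP_eq_sum_count {α ι : Type*} [DecidableEq α] {A : Multiset α}
    {P : α → Prop} [DecidablePred P] {s : Finset ι} {u : ι → α} (hu : Set.InjOn u s)
    (h : ∀ v ∈ A, P v ↔ ∃ i ∈ s, u i = v) : A.countP P = ∑ i ∈ s, A.count (u i) := by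
  rw [← Finset.sum_image (f := fun a => A.count a) hu, Multiset.countP_eq_card_filter,
    ← Multiset.sum_count_eq_card (s := s.image u)]
  · refine Finset.sum_congr rfl fun x hx => ?_
    rw [Multiset.count_filter]
    split_ifs with hP
    · rfl
    · refine (Multiset.count_eq_zero.2 fun hxA => hP ((h x hxA).2 ?_)).symm
      simpa using hx
  · intro v hv
    rw [Multiset.mem_filter] at hv
    simpa using (h v hv.1).1 hv.2

lemma Finset.card_filter_ne_zero_eq_sum {ι : Type*} (s : Finset ι) (x : ι → ℕ)
    (hx : ∀ i ∈ s, x i ≤ 1) : (s.filter (x · ≠ 0)).card = ∑ i ∈ s, x i := by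
  rw [Finset.card_filter]
  exact Finset.sum_congr rfl fun i hi => by have := hx i hi; split_ifs <;> omega

lemma Finset.sum_comp_eq_sum_of_card_fiber_eq_one {α β M : Type*} [Fintype β] [DecidableEq β]
    [AddCommMonoid M] {s : Finset α} {f : α → β} (h : ∀ b, (s.filter (f · = b)).card = 1)
    (g : β → M) : ∑ a ∈ s, g (f a) = ∑ b, g b := by
  rw [← Finset.sum_fiberwise s f]
  refine Finset.sum_congr rfl fun b _ => ?_
  rw [Finset.sum_congr rfl fun a ha => by rw [(Finset.mem_filter.1 ha).2], Finset.sum_const,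
    h b, one_smul]

lemma eq_zero_and_eq_of_add_mul_add_eq {n S R k : ℕ} (hk : k ≤ n + 1)
    (h : S + ((n + 1) * (S + n) + R) = n * (n + 1) + k) : S = 0 ∧ R = k := by
  obtain rfl : S = 0 := by
    by_contra hS
    have hS := Nat.pos_of_ne_zero hS
    nlinarith [Nat.le_mul_of_pos_right n hS]
  exact ⟨rfl, by linarith⟩

lemma Multiset.range_succ_eq_cons_map (L : ℕ) :
    Multiset.range (L + 1) = 0 ::ₘ (Multiset.range L).map (· + 1) := by
  simp [Multiset.range, List.range_succ_eq_map]

lemma Finset.val_map_val_eq_range {n L : ℕ} {s : Finset (Fin n)} (hL : L ≤ n)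
    (hs : ∀ t : Fin n, t ∈ s ↔ t.1 < L) : s.val.map Fin.val = Multiset.range L := by
  change Multiset.map Fin.valEmbedding _ = _
  rw [← Finset.map_val, ← Finset.range_val]
  congr 1
  ext m
  simp only [Finset.mem_map, hs, Fin.valEmbedding_apply, Finset.mem_range]
  exact ⟨fun ⟨t, ht, htm⟩ => htm ▸ ht, fun hm => ⟨⟨m, by omega⟩, hm, rfl⟩⟩

section Scores

variable {n : ℕ}

lemma sum_cand18 {M : Type*} [AddCommMonoid M] (f : Cand18 n → M) :
    ∑ c, f c = (∑ i, f (aC i) + (∑ j, f (bC j) +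
      (∑ et : (Fin n × Fin n) × Fin (n + 1), f (dC et.1 et.2) + f (pC n)))) +
      (f (rC n) + f (rhatC n)) := by
  simp only [Fintype.sum_sum_type, Fintype.sum_bool, Fintype.sum_unique]
  rfl

lemma flScore18_add (U V : Multiset (Vote18 n)) (c : Cand18 n) :
    flScore18 (U + V) c = flScore18 U c + flScore18 V c := by
  simp only [flScore18, Multiset.countP_add]
  push_cast
  ring

lemma flScore18_singleton (v : Vote18 n) (c : Cand18 n) :
    flScore18 {v} c = (if v.1 = c then 1 else 0) - (if v.2 = c then 1 else 0) := by
  simp only [flScore18, Multiset.countP_eq_card_filter, Multiset.filter_singleton]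
  split_ifs <;> simp

lemma flScore18_bind {ι : Type*} (M : Multiset ι) (f : ι → Multiset (Vote18 n))
    (c : Cand18 n) :
    flScore18 (M.bind f) c = (M.map fun x => flScore18 (f x) c).sum := by
  induction M using Multiset.induction with
  | empty => simp [flScore18]
  | cons x M ih => simp [flScore18_add, ih]

lemma flScore18_map {ι : Type*} (M : Multiset ι) (f : ι → Vote18 n) (c : Cand18 n) :
    flScore18 (M.map f) c =
      (M.map fun x => (if (f x).1 = c then 1 else 0) - (if (f x).2 = c then 1 else 0)).sum := by
  rw [← Multiset.bind_singleton, flScore18_bind]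
  simp only [flScore18_singleton]

lemma flScore18_path (f : ℕ → Cand18 n) (m : ℕ) (c : Cand18 n) :
    flScore18 ((Multiset.range m).map fun i => (f i, f (i + 1))) c =
      (if f 0 = c then 1 else 0) - (if f m = c then 1 else 0) := by
  rw [flScore18_map, ← Finset.range_val, ← Finset.sum_eq_multiset_sum, Finset.sum_range_sub']

lemma sum_flScore18 (V : Multiset (Vote18 n)) : ∑ c, flScore18 V c = 0 := by
  simp only [flScore18, Finset.sum_sub_distrib, ← Nat.cast_sum,
    ← Multiset.card_eq_sum_countP_fiberwise, sub_self]

end Scores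

section Matching

variable {α β : Type*} [DecidableEq α] [DecidableEq β]

lemma exists_matching_of_sum_eq_one {E E' : Finset (α × β)} {k : ℕ} (x : α × β → ℕ)
    (hrow : ∀ i, ∑ e ∈ E.filter (·.1 = i), x e = 1)
    (hcol : ∀ j, ∑ e ∈ E.filter (·.2 = j), x e = 1)
    (hred : ∑ e ∈ E.filter (· ∈ E'), x e = k) :
    ∃ F ⊆ E, (∀ i, (F.filter (·.1 = i)).card = 1) ∧
      (∀ j, (F.filter (·.2 = j)).card = 1) ∧ (F ∩ E').card = k := by
  have hx : ∀ e ∈ E, x e ≤ 1 := fun e he =>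
    hrow e.1 ▸ Finset.single_le_sum (fun _ _ => Nat.zero_le _) (Finset.mem_filter.2 ⟨he, rfl⟩)
  have hcard (p : α × β → Prop) [DecidablePred p] :
      ((E.filter (x · ≠ 0)).filter p).card = ∑ e ∈ E.filter p, x e := by
    rw [Finset.filter_comm]
    exact Finset.card_filter_ne_zero_eq_sum _ _ fun e he => hx e (Finset.mem_filter.1 he).1
  refine ⟨E.filter (x · ≠ 0), Finset.filter_subset _ _, fun i => (hcard _).trans (hrow i),
    fun j => (hcard _).trans (hcol j), ?_⟩
  rw [← Finset.filter_mem_eq_inter, hcard, hred]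

end Matching

section Chains

lemma dC_inj {n : ℕ} {e e' : Fin n × Fin n} {t t' : Fin (n + 1)} :
    dC e t = dC e' t' ↔ e = e' ∧ t = t' := by
  simp [dC]

variable {n : ℕ} (E' : Finset (Fin n × Fin n))

def chainLen (e : Fin n × Fin n) : ℕ := if e ∈ E' then n else n - 1

lemma chainLen_add_two (e : Fin n × Fin n) :
    chainLen E' e + 2 = n + 1 + if e ∈ E' then 1 else 0 := by
  have := e.1.pos
  unfold chainLen; split_ifs <;> omega

lemma chainLen_lt (e : Fin n × Fin n) : chainLen E' e < n + 1 := by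
  unfold chainLen; split_ifs <;> omega

/-- Positions along the chain of `e = (i, j)`: `b_j`, then the dummies `d_0, …, d_L` with
`L = chainLen E' e`, then `a_i`; the chain votes join consecutive positions. -/
def chainNode (e : Fin n × Fin n) : ℕ → Cand18 n
  | 0 => bC e.2
  | m + 1 =>
    if h : m ≤ chainLen E' e then dC e ⟨m, by have := chainLen_lt E' e; omega⟩ else aC e.1

def chainVote (e : Fin n × Fin n) (m : ℕ) : Vote18 n :=
  (chainNode E' e m, chainNode E' e (m + 1))

def openChain (e : Fin n × Fin n) : Multiset (Vote18 n) :=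
  (Multiset.range (chainLen E' e + 2)).map (chainVote E' e)

def edgeChain (e : Fin n × Fin n) : Multiset (Vote18 n) :=
  if e ∈ E' then redChain e else plainChain e

variable {E'}

@[simp] lemma chainNode_zero (e : Fin n × Fin n) : chainNode E' e 0 = bC e.2 := rfl

lemma chainNode_succ {e : Fin n × Fin n} {m : ℕ} (hm : m < chainLen E' e + 1) :
    chainNode E' e (m + 1) = dC e ⟨m, by have := chainLen_lt E' e; omega⟩ :=
  dif_pos (by omega)

@[simp] lemma chainNode_one (e : Fin n × Fin n) : chainNode E' e 1 = dC e 0 :=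
  chainNode_succ (m := 0) (by omega)

@[simp] lemma chainNode_chainLen_add_one (e : Fin n × Fin n) :
    chainNode E' e (chainLen E' e + 1) = dC e ⟨chainLen E' e, chainLen_lt E' e⟩ :=
  chainNode_succ (by omega)

@[simp] lemma chainNode_chainLen_add_two (e : Fin n × Fin n) :
    chainNode E' e (chainLen E' e + 2) = aC e.1 :=
  dif_neg (by omega)

lemma openChain_eq (e : Fin n × Fin n) :
    openChain E' e = {(bC e.2, dC e 0)} +
      (Multiset.range (chainLen E' e)).map (fun m => chainVote E' e (m + 1)) +
      {(dC e ⟨chainLen E' e, chainLen_lt E' e⟩, aC e.1)} := by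
  rw [openChain, Multiset.range_succ, Multiset.range_succ_eq_cons_map]
  simp only [Multiset.map_cons, Multiset.map_map, Function.comp_def]
  rw [← Multiset.singleton_add, ← Multiset.singleton_add, chainVote, chainVote,
    chainNode_zero, chainNode_one, chainNode_chainLen_add_one, chainNode_chainLen_add_two]
  abel

lemma map_dC_eq_chainVote {e : Fin n × Fin n} {s : Finset (Fin n)}
    (hs : ∀ t : Fin n, t ∈ s ↔ t.1 < chainLen E' e) :
    s.val.map (fun t => (dC e t.castSucc, dC e t.succ)) =
      (Multiset.range (chainLen E' e)).map (fun m => chainVote E' e (m + 1)) := by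
  have hL := chainLen_lt E' e
  rw [← Finset.val_map_val_eq_range (by omega) hs, Multiset.map_map]
  refine Multiset.map_congr rfl fun t ht => ?_
  have ht := (hs t).1 ht
  rw [Function.comp_apply, chainVote, chainNode_succ (by omega), chainNode_succ (by omega)]
  rfl

lemma edgeChain_eq (e : Fin n × Fin n) :
    edgeChain E' e = openChain E' e + {(aC e.1, bC e.2)} := by
  have hn := e.1.pos
  rw [openChain_eq, edgeChain]
  by_cases he : e ∈ E'
  · have hL : chainLen E' e = n := if_pos he
    have hlast : Fin.last n = ⟨chainLen E' e, chainLen_lt E' e⟩ := Fin.ext hL.symm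
    rw [if_pos he, redChain, map_dC_eq_chainVote (E' := E') (by simp [hL]), hlast,
      Multiset.insert_eq_cons, ← Multiset.singleton_add]
    abel
  · have hL : chainLen E' e = n - 1 := if_neg he
    have hlast : (⟨n - 1, by omega⟩ : Fin (n + 1)) = ⟨chainLen E' e, chainLen_lt E' e⟩ :=
      Fin.ext hL.symm
    rw [if_neg he, plainChain, map_dC_eq_chainVote (E' := E') (by simp [hL]; omega), hlast,
      Multiset.insert_eq_cons, ← Multiset.singleton_add]
    abel

@[simp] lemma chainNode_eq_bC_iff {e : Fin n × Fin n} {m : ℕ} {j : Fin n} :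
    chainNode E' e m = bC j ↔ m = 0 ∧ e.2 = j := by
  cases m with
  | zero => simp [bC]
  | succ m => simp only [chainNode]; split_ifs <;> simp [aC, bC, dC]

@[simp] lemma chainNode_eq_aC_iff {e : Fin n × Fin n} {m : ℕ} {i : Fin n} :
    chainNode E' e m = aC i ↔ e.1 = i ∧ chainLen E' e + 2 ≤ m := by
  cases m with
  | zero => simp [aC, bC]
  | succ m => simp only [chainNode]; split_ifs <;> simp [aC, dC] <;> omega

@[simp] lemma chainNode_eq_dC_iff {e e' : Fin n × Fin n} {m : ℕ} {t : Fin (n + 1)} :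
    chainNode E' e m = dC e' t ↔ e = e' ∧ m = t.1 + 1 ∧ t.1 ≤ chainLen E' e := by
  cases m with
  | zero => simp [dC, bC]
  | succ m =>
    simp only [chainNode]; split_ifs
    · simp [dC, Fin.ext_iff]; omega
    · simp [aC, dC]; omega

@[simp] lemma chainNode_ne_pC (e : Fin n × Fin n) (m : ℕ) : chainNode E' e m ≠ pC n := by
  cases m with
  | zero => simp [bC, pC]
  | succ m => simp only [chainNode]; split_ifs <;> simp [aC, dC, pC]

@[simp] lemma chainNode_ne_rC (e : Fin n × Fin n) (m : ℕ) : chainNode E' e m ≠ rC n := by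
  cases m with
  | zero => simp [bC, rC]
  | succ m => simp only [chainNode]; split_ifs <;> simp [aC, dC, rC]

@[simp] lemma chainNode_ne_rhatC (e : Fin n × Fin n) (m : ℕ) : chainNode E' e m ≠ rhatC n := by
  cases m with
  | zero => simp [bC, rhatC]
  | succ m => simp only [chainNode]; split_ifs <;> simp [aC, dC, rhatC]

lemma flScore18_openChain (e : Fin n × Fin n) (c : Cand18 n) :
    flScore18 (openChain E' e) c =
      (if bC e.2 = c then 1 else 0) - (if aC e.1 = c then 1 else 0) := by
  rw [openChain, ← chainNode_zero (E' := E') e, ← chainNode_chainLen_add_two (E' := E') e]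
  exact flScore18_path _ _ c

lemma flScore18_edgeChain (e : Fin n × Fin n) (c : Cand18 n) :
    flScore18 (edgeChain E' e) c = 0 := by
  rw [edgeChain_eq, flScore18_add, flScore18_openChain, flScore18_singleton]
  ring

lemma card_openChain (e : Fin n × Fin n) :
    Multiset.card (openChain E' e) = chainLen E' e + 2 := by
  simp [openChain]

lemma openChain_le_edgeChain (e : Fin n × Fin n) : openChain E' e ≤ edgeChain E' e := by
  rw [edgeChain_eq]
  exact Multiset.le_add_right _ _

lemma mem_edgeChain {e : Fin n × Fin n} {v : Vote18 n} (hv : v ∈ edgeChain E' e) :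
    v = (aC e.1, bC e.2) ∨ ∃ m < chainLen E' e + 2, v = chainVote E' e m := by
  rw [edgeChain_eq, openChain] at hv
  simp only [Multiset.mem_add, Multiset.mem_map, Multiset.mem_range,
    Multiset.mem_singleton] at hv
  rcases hv with ⟨m, hm, rfl⟩ | rfl
  · exact Or.inr ⟨m, hm, rfl⟩
  · exact Or.inl rfl

end Chains

section Votes

variable {n : ℕ} {E E' : Finset (Fin n × Fin n)} {k : ℕ}

variable (n) in
def vertexVotes : Multiset (Vote18 n) :=
  (Finset.univ : Finset (Fin n)).val.map fun i => (aC i, bC i)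

variable (E E') in
def baseVotes : Multiset (Vote18 n) := vertexVotes n + E.val.bind (edgeChain E')

lemma votes18_eq_baseVotes_add :
    votes18 E E' k = baseVotes E E' + Multiset.replicate (n * (n + 1) + k) (rC n, rhatC n) :=
  rfl

lemma flScore18_baseVotes (c : Cand18 n) :
    flScore18 (baseVotes E E') c =
      ∑ i, ((if aC i = c then 1 else 0) - (if bC i = c then 1 else 0)) := by
  rw [baseVotes, flScore18_add, flScore18_bind, vertexVotes, flScore18_map]
  simp only [flScore18_edgeChain, Multiset.map_const', Multiset.sum_replicate, smul_zero,
    add_zero]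
  rfl

lemma votes18_sub_replicate :
    votes18 E E' k - Multiset.replicate (n * (n + 1) + k) (rC n, rhatC n) = baseVotes E E' :=
  add_tsub_cancel_right _ _

lemma rVote_not_mem_baseVotes : (rC n, rhatC n) ∉ baseVotes E E' := by
  intro h
  simp only [baseVotes, vertexVotes, Multiset.mem_add, Multiset.mem_map, Multiset.mem_bind,
    Finset.mem_val] at h
  rcases h with ⟨i, -, h⟩ | ⟨e, -, h⟩
  · simp [aC, rC] at h
  · rcases mem_edgeChain h with h | ⟨m, -, h⟩
    · simp [aC, rC] at h
    · exact chainNode_ne_rC e m (congrArg Prod.fst h).symm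

lemma count_rVote_votes18 :
    (votes18 E E' k).count (rC n, rhatC n) = n * (n + 1) + k := by
  rw [votes18_eq_baseVotes_add, Multiset.count_add,
    Multiset.count_eq_zero.2 rVote_not_mem_baseVotes, Multiset.count_replicate_self, zero_add]

lemma flScore18_baseVotes_aC (i : Fin n) : flScore18 (baseVotes E E') (aC i) = 1 := by
  simp [flScore18_baseVotes, aC, bC]

lemma flScore18_baseVotes_bC (j : Fin n) : flScore18 (baseVotes E E') (bC j) = -1 := by
  simp [flScore18_baseVotes, aC, bC]

lemma flScore18_baseVotes_dC (e : Fin n × Fin n) (t : Fin (n + 1)) :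
    flScore18 (baseVotes E E') (dC e t) = 0 := by
  simp [flScore18_baseVotes, aC, bC, dC]

lemma mem_votes18 {v : Vote18 n} (hv : v ∈ votes18 E E' k) :
    (∃ i j, v = (aC i, bC j)) ∨
      (∃ e ∈ E, ∃ m < chainLen E' e + 2, v = chainVote E' e m) ∨ v = (rC n, rhatC n) := by
  simp only [votes18_eq_baseVotes_add, baseVotes, vertexVotes, Multiset.mem_add,
    Multiset.mem_map, Multiset.mem_bind, Finset.mem_val, Finset.mem_univ, true_and] at hv
  rcases hv with (⟨i, rfl⟩ | ⟨e, he, hv⟩) | hv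
  · exact Or.inl ⟨i, i, rfl⟩
  · rcases mem_edgeChain hv with rfl | ⟨m, hm, rfl⟩
    · exact Or.inl ⟨e.1, e.2, rfl⟩
    · exact Or.inr (Or.inl ⟨e, he, m, hm, rfl⟩)
  · exact Or.inr (Or.inr (Multiset.eq_of_mem_replicate hv))

variable {A : Multiset (Vote18 n)}

lemma countP_fst_eq_dC (hA : ∀ v ∈ A, v ∈ votes18 E E' k) (e : Fin n × Fin n)
    (t : Fin (n + 1)) :
    A.countP (fun v => v.1 = dC e t) =
      if e ∈ E ∧ t.1 ≤ chainLen E' e then A.count (chainVote E' e (t.1 + 1)) else 0 := by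
  refine Multiset.countP_eq_ite_count fun v hv => ⟨fun h => ?_, ?_⟩
  · rcases mem_votes18 (hA v hv) with ⟨i, j, rfl⟩ | ⟨e', he', m, hm, rfl⟩ | rfl
    · simp [aC, dC] at h
    · simp only [chainVote, chainNode_eq_dC_iff] at h
      obtain ⟨rfl, rfl, ht⟩ := h
      exact ⟨⟨he', ht⟩, rfl⟩
    · simp [rC, dC] at h
  · rintro ⟨⟨-, ht⟩, rfl⟩
    simp [chainVote, ht]

lemma countP_snd_eq_dC (hA : ∀ v ∈ A, v ∈ votes18 E E' k) (e : Fin n × Fin n)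
    (t : Fin (n + 1)) :
    A.countP (fun v => v.2 = dC e t) =
      if e ∈ E ∧ t.1 ≤ chainLen E' e then A.count (chainVote E' e t.1) else 0 := by
  refine Multiset.countP_eq_ite_count fun v hv => ⟨fun h => ?_, ?_⟩
  · rcases mem_votes18 (hA v hv) with ⟨i, j, rfl⟩ | ⟨e', he', m, hm, rfl⟩ | rfl
    · simp [bC, dC] at h
    · simp only [chainVote, chainNode_eq_dC_iff] at h
      obtain ⟨rfl, hmt, ht⟩ := h
      obtain rfl : m = t.1 := by omega
      exact ⟨⟨he', ht⟩, rfl⟩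
    · simp [rhatC, dC] at h
  · rintro ⟨⟨-, ht⟩, rfl⟩
    simp [chainVote, ht]

lemma countP_snd_eq_aC (hA : ∀ v ∈ A, v ∈ votes18 E E' k) (i : Fin n) :
    A.countP (fun v => v.2 = aC i) =
      ∑ e ∈ E.filter (·.1 = i), A.count (chainVote E' e (chainLen E' e + 1)) := by
  refine Multiset.countP_eq_sum_count (fun e _ e' _ h => ?_) fun v hv => ⟨fun h => ?_, ?_⟩
  · exact (dC_inj.1 (by simpa [chainVote] using congrArg Prod.fst h)).1
  · rcases mem_votes18 (hA v hv) with ⟨i, j, rfl⟩ | ⟨e, he, m, hm, rfl⟩ | rfl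
    · simp [aC, bC] at h
    · simp only [chainVote, chainNode_eq_aC_iff] at h
      obtain ⟨rfl, hm'⟩ := h
      exact ⟨e, by simp [he], by rw [show m = chainLen E' e + 1 by omega]⟩
    · simp [aC, rhatC] at h
  · rintro ⟨e, he, rfl⟩
    simp_all [chainVote]

lemma countP_fst_eq_bC (hA : ∀ v ∈ A, v ∈ votes18 E E' k) (j : Fin n) :
    A.countP (fun v => v.1 = bC j) = ∑ e ∈ E.filter (·.2 = j), A.count (chainVote E' e 0) := by
  refine Multiset.countP_eq_sum_count (fun e _ e' _ h => ?_) fun v hv => ⟨fun h => ?_, ?_⟩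
  · exact (dC_inj.1 (by simpa [chainVote] using congrArg Prod.snd h)).1
  · rcases mem_votes18 (hA v hv) with ⟨i, j, rfl⟩ | ⟨e, he, m, hm, rfl⟩ | rfl
    · simp [aC, bC] at h
    · simp only [chainVote, chainNode_eq_bC_iff] at h
      obtain ⟨rfl, rfl⟩ := h
      exact ⟨e, by simp [he], rfl⟩
    · simp [bC, rC] at h
  · rintro ⟨e, he, rfl⟩
    simp_all [chainVote]

lemma countP_fst_eq_pC (hA : ∀ v ∈ A, v ∈ votes18 E E' k) :
    A.countP (fun v => v.1 = pC n) = 0 := Multiset.countP_eq_zero.2 fun v hv h => by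
  rcases mem_votes18 (hA v hv) with ⟨i, j, rfl⟩ | ⟨e, he, m, hm, rfl⟩ | rfl
  · simp [aC, pC] at h
  · exact chainNode_ne_pC e m h
  · simp [rC, pC] at h

lemma flScore18_pC (hA : ∀ v ∈ A, v ∈ votes18 E E' k) : flScore18 A (pC n) = 0 := by
  have hsnd : A.countP (fun v => v.2 = pC n) = 0 := Multiset.countP_eq_zero.2 fun v hv h => by
    rcases mem_votes18 (hA v hv) with ⟨i, j, rfl⟩ | ⟨e, he, m, hm, rfl⟩ | rfl
    · simp [bC, pC] at h
    · exact chainNode_ne_pC e (m + 1) h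
    · simp [rhatC, pC] at h
  simp [flScore18, countP_fst_eq_pC hA, hsnd]

lemma countP_fst_eq_rC (hA : ∀ v ∈ A, v ∈ votes18 E E' k) :
    A.countP (fun v => v.1 = rC n) = A.count (rC n, rhatC n) := by
  refine (Multiset.countP_eq_ite_count (Q := True) fun v hv => ?_).trans (if_pos trivial)
  rcases mem_votes18 (hA v hv) with ⟨i, j, rfl⟩ | ⟨e, he, m, hm, rfl⟩ | rfl
  · simp [aC, rC]
  · simp [chainVote, Prod.ext_iff]
  · simp

lemma flScore18_rC (hA : ∀ v ∈ A, v ∈ votes18 E E' k) :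
    flScore18 A (rC n) = A.count (rC n, rhatC n) := by
  have hsnd : A.countP (fun v => v.2 = rC n) = 0 := Multiset.countP_eq_zero.2 fun v hv h => by
    rcases mem_votes18 (hA v hv) with ⟨i, j, rfl⟩ | ⟨e, he, m, hm, rfl⟩ | rfl
    · simp [bC, rC] at h
    · exact chainNode_ne_rC e (m + 1) h
    · simp [rhatC, rC] at h
  simp [flScore18, countP_fst_eq_rC hA, hsnd]

lemma countP_fst_eq_rhatC (hA : ∀ v ∈ A, v ∈ votes18 E E' k) :
    A.countP (fun v => v.1 = rhatC n) = 0 := Multiset.countP_eq_zero.2 fun v hv h => by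
  rcases mem_votes18 (hA v hv) with ⟨i, j, rfl⟩ | ⟨e, he, m, hm, rfl⟩ | rfl
  · simp [aC, rhatC] at h
  · exact chainNode_ne_rhatC e m h
  · simp [rC, rhatC] at h

lemma exists_fst_eq_aC_of_snd_eq_bC {v : Vote18 n} (hv : v ∈ votes18 E E' k) {j : Fin n}
    (h : v.2 = bC j) : ∃ i, v.1 = aC i := by
  rcases mem_votes18 hv with ⟨i, j, rfl⟩ | ⟨e, he, m, hm, rfl⟩ | rfl
  · exact ⟨i, rfl⟩
  · simp [chainVote] at h
  · simp [bC, rhatC] at h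

lemma count_chainVote_eq_count_zero (hA : ∀ v ∈ A, v ∈ votes18 E E' k)
    {e : Fin n × Fin n} (hd : ∀ t, flScore18 A (dC e t) = 0) (he : e ∈ E) :
    ∀ m ≤ chainLen E' e + 1, A.count (chainVote E' e m) = A.count (chainVote E' e 0) := by
  intro m
  induction m with
  | zero => intro _; rfl
  | succ m ih =>
    intro hm
    have hL := chainLen_lt E' e
    have h := hd ⟨m, by omega⟩
    rw [flScore18, countP_fst_eq_dC hA, countP_snd_eq_dC hA, if_pos ⟨he, (by omega : m ≤ _)⟩,
      if_pos ⟨he, (by omega : m ≤ _)⟩, sub_eq_zero, Nat.cast_inj] at h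
    rw [h, ih (by omega)]

lemma card_eq_of_count_rVote_eq_zero (hA : ∀ v ∈ A, v ∈ votes18 E E' k)
    (hr : A.count (rC n, rhatC n) = 0)
    {x : Fin n × Fin n → ℕ}
    (hconst : ∀ e ∈ E, ∀ m ≤ chainLen E' e + 1, A.count (chainVote E' e m) = x e) :
    Multiset.card A = ∑ i, A.countP (fun v => v.1 = aC i) +
      ∑ e ∈ E, (chainLen E' e + 2) * x e := by
  have hb : ∑ j, A.countP (fun v => v.1 = bC j) = ∑ e ∈ E, x e := by
    simp only [countP_fst_eq_bC hA]
    rw [Finset.sum_fiberwise E _ _]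
    exact Finset.sum_congr rfl fun e he => hconst e he 0 (Nat.zero_le _)
  have hd : ∑ et : (Fin n × Fin n) × Fin (n + 1), A.countP (fun v => v.1 = dC et.1 et.2) =
      ∑ e ∈ E, (chainLen E' e + 1) * x e := by
    rw [Fintype.sum_prod_type, ← Finset.sum_subset (Finset.subset_univ E)]
    · refine Finset.sum_congr rfl fun e he => ?_
      have hcard : (Finset.univ.filter fun t : Fin (n + 1) => t.1 < chainLen E' e + 1).card =
          chainLen E' e + 1 := by
        rw [Fin.card_filter_val_lt]
        exact min_eq_right (chainLen_lt E' e)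
      rw [← hcard, Finset.card_eq_sum_ones,
        Finset.sum_mul, Finset.sum_filter]
      refine Finset.sum_congr rfl fun t _ => ?_
      rw [countP_fst_eq_dC hA]
      by_cases ht : t.1 ≤ chainLen E' e
      · rw [if_pos ⟨he, ht⟩, if_pos (Nat.lt_succ_of_le ht), one_mul,
          hconst e he _ (Nat.succ_le_succ ht)]
      · rw [if_neg (by tauto), if_neg (by omega : ¬t.1 < chainLen E' e + 1)]
    · intro e _ he
      exact Finset.sum_eq_zero fun t _ => by rw [countP_fst_eq_dC hA, if_neg (by tauto)]
  rw [Multiset.card_eq_sum_countP_fiberwise Prod.fst, sum_cand18, hb, hd, countP_fst_eq_pC hA,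
    countP_fst_eq_rC hA, hr, countP_fst_eq_rhatC hA, add_zero, add_zero, add_zero,
    ← Finset.sum_add_distrib]
  exact congrArg _ (Finset.sum_congr rfl fun e _ => by ring)

lemma countP_fst_eq_aC_add_one {x : Fin n × Fin n → ℕ}
    (hA : ∀ v ∈ A, v ∈ votes18 E E' k)
    (hconst : ∀ e ∈ E, ∀ m ≤ chainLen E' e + 1, A.count (chainVote E' e m) = x e)
    {i : Fin n} (hi : flScore18 A (aC i) = -1) :
    A.countP (·.1 = aC i) + 1 = ∑ e ∈ E.filter (·.1 = i), x e := by
  have hlast : ∑ e ∈ E.filter (·.1 = i), A.count (chainVote E' e (chainLen E' e + 1)) =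
      ∑ e ∈ E.filter (·.1 = i), x e :=
    Finset.sum_congr rfl fun e he => hconst e (Finset.mem_filter.1 he).1 _ le_rfl
  rw [flScore18, countP_snd_eq_aC hA, hlast] at hi
  omega

lemma sum_eq_countP_snd_eq_bC_add_one {x : Fin n × Fin n → ℕ}
    (hA : ∀ v ∈ A, v ∈ votes18 E E' k)
    (hconst : ∀ e ∈ E, ∀ m ≤ chainLen E' e + 1, A.count (chainVote E' e m) = x e)
    {j : Fin n} (hj : flScore18 A (bC j) = 1) :
    ∑ e ∈ E.filter (·.2 = j), x e = A.countP (·.2 = bC j) + 1 := by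
  have hfirst : ∑ e ∈ E.filter (·.2 = j), A.count (chainVote E' e 0) =
      ∑ e ∈ E.filter (·.2 = j), x e :=
    Finset.sum_congr rfl fun e he => hconst e (Finset.mem_filter.1 he).1 0 (Nat.zero_le _)
  rw [flScore18, countP_fst_eq_bC hA, hfirst] at hj
  omega

theorem exists_matching_of_flScore18_eq_zero (hk : k ≤ n + 1)
    (hA : ∀ v ∈ A, v ∈ votes18 E E' k) (hr : A.count (rC n, rhatC n) = 0)
    (hcard : Multiset.card A = n * (n + 1) + k)
    (hzero : ∀ c, flScore18 (baseVotes E E' + A) c = 0) :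
    ∃ F ⊆ E, (∀ i : Fin n, (F.filter (fun e => e.1 = i)).card = 1) ∧
      (∀ j : Fin n, (F.filter (fun e => e.2 = j)).card = 1) ∧ (F ∩ E').card = k := by
  have hscore (c : Cand18 n) : flScore18 A c = -flScore18 (baseVotes E E') c := by
    linarith [hzero c, flScore18_add (baseVotes E E') A c]
  obtain ⟨x, hconst⟩ : ∃ x : Fin n × Fin n → ℕ,
      ∀ e ∈ E, ∀ m ≤ chainLen E' e + 1, A.count (chainVote E' e m) = x e :=
    ⟨_, fun e he => count_chainVote_eq_count_zero hA
      (fun t => by rw [hscore, flScore18_baseVotes_dC, neg_zero]) he⟩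
  have hrow (i : Fin n) := countP_fst_eq_aC_add_one hA hconst (i := i)
    (by rw [hscore, flScore18_baseVotes_aC])
  have hcol (j : Fin n) := sum_eq_countP_snd_eq_bC_add_one hA hconst (j := j)
    (by rw [hscore, flScore18_baseVotes_bC, neg_neg])
  obtain ⟨S, hS⟩ : ∃ S, ∑ i, A.countP (·.1 = aC i) = S := ⟨_, rfl⟩
  have hsum : ∑ e ∈ E, x e = S + n := by
    rw [← Finset.sum_fiberwise E (·.1) x]
    simp [← hrow, Finset.sum_add_distrib, hS]
  have hlen : ∑ e ∈ E, (chainLen E' e + 2) * x e =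
      (n + 1) * (S + n) + ∑ e ∈ E.filter (· ∈ E'), x e := by
    simp only [chainLen_add_two, add_mul, Finset.sum_add_distrib, ← Finset.mul_sum, hsum,
      ite_mul, one_mul, zero_mul, Finset.sum_filter]
  rw [card_eq_of_count_rVote_eq_zero hA hr hconst, hS, hlen] at hcard
  obtain ⟨rfl, hred⟩ := eq_zero_and_eq_of_add_mul_add_eq hk hcard
  have ha0 (i : Fin n) : A.countP (·.1 = aC i) = 0 :=
    Finset.sum_eq_zero_iff.1 hS i (Finset.mem_univ i)
  have hb0 (j : Fin n) : A.countP (·.2 = bC j) = 0 := Multiset.countP_eq_zero.2 fun v hv h => by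
    obtain ⟨i, hi⟩ := exists_fst_eq_aC_of_snd_eq_bC (hA v hv) h
    exact Multiset.countP_eq_zero.1 (ha0 i) v hv hi
  exact exists_matching_of_sum_eq_one x (fun i => by rw [← hrow, ha0])
    (fun j => by rw [hcol, hb0]) hred

lemma flScore18_eq_zero_of_forall_le_pC {W : Multiset (Vote18 n)}
    (hW : ∀ v ∈ W, v ∈ votes18 E E' k) (hwin : ∀ c, flScore18 W c ≤ flScore18 W (pC n))
    (c : Cand18 n) : flScore18 W c = 0 := by
  rw [flScore18_pC hW] at hwin
  exact (Finset.sum_eq_zero_iff_of_nonpos fun c _ => hwin c).1 (sum_flScore18 W) c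
    (Finset.mem_univ c)

theorem eq_replicate_of_forall_le_pC {R : Multiset (Vote18 n)}
    (hRcard : Multiset.card R ≤ n * (n + 1) + k) (hA : ∀ v ∈ A, v ∈ votes18 E E' k)
    (hwin : ∀ c, flScore18 (votes18 E E' k - R + A) c ≤
      flScore18 (votes18 E E' k - R + A) (pC n)) :
    R = Multiset.replicate (n * (n + 1) + k) (rC n, rhatC n) ∧ A.count (rC n, rhatC n) = 0 := by
  have hW : ∀ v ∈ votes18 E E' k - R + A, v ∈ votes18 E E' k := fun v hv =>
    (Multiset.mem_add.1 hv).elim (Multiset.mem_of_le (Multiset.sub_le_self _ _)) (hA v)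
  have hr := flScore18_eq_zero_of_forall_le_pC hW hwin (rC n)
  rw [flScore18_rC hW, Multiset.count_add, Multiset.count_sub, count_rVote_votes18] at hr
  have hRr := Multiset.count_le_card (rC n, rhatC n) R
  refine ⟨Multiset.eq_replicate.2 ⟨by omega, fun v hv => ?_⟩, by omega⟩
  exact (Multiset.count_eq_card.1 (by omega) v hv).symm

lemma mem_votes18_of_mem_bind_openChain {F : Finset (Fin n × Fin n)} (hFE : F ⊆ E)
    {v : Vote18 n} (hv : v ∈ F.val.bind (openChain E')) : v ∈ votes18 E E' k := by
  obtain ⟨e, he, hv⟩ := Multiset.mem_bind.1 hv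
  rw [votes18_eq_baseVotes_add, baseVotes]
  exact Multiset.mem_add.2 <| Or.inl <| Multiset.mem_add.2 <| Or.inr <|
    Multiset.mem_bind.2 ⟨e, hFE he, Multiset.mem_of_le (openChain_le_edgeChain e) hv⟩

lemma card_bind_openChain {F : Finset (Fin n × Fin n)}
    (hrow : ∀ i : Fin n, (F.filter (fun e => e.1 = i)).card = 1) :
    Multiset.card (F.val.bind (openChain E')) = n * (n + 1) + (F ∩ E').card := by
  have hF : F.card = n := by
    simpa using Finset.sum_comp_eq_sum_of_card_fiber_eq_one hrow fun _ => (1 : ℕ)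
  rw [Multiset.card_bind]
  change ∑ e ∈ F, Multiset.card (openChain E' e) = _
  simp only [card_openChain, chainLen_add_two, Finset.sum_add_distrib, Finset.sum_const, hF,
    smul_eq_mul, Finset.sum_boole, Nat.cast_id, Finset.filter_mem_eq_inter]
  ring

lemma flScore18_baseVotes_add_bind_openChain {F : Finset (Fin n × Fin n)}
    (hrow : ∀ i : Fin n, (F.filter (fun e => e.1 = i)).card = 1)
    (hcol : ∀ j : Fin n, (F.filter (fun e => e.2 = j)).card = 1) (c : Cand18 n) :
    flScore18 (baseVotes E E' + F.val.bind (openChain E')) c = 0 := by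
  rw [flScore18_add, flScore18_baseVotes, flScore18_bind]
  change _ + ∑ e ∈ F, flScore18 (openChain E' e) c = 0
  simp only [flScore18_openChain, Finset.sum_sub_distrib,
    Finset.sum_comp_eq_sum_of_card_fiber_eq_one hrow fun i => if aC i = c then (1 : ℤ) else 0,
    Finset.sum_comp_eq_sum_of_card_fiber_eq_one hcol fun j => if bC j = c then (1 : ℤ) else 0]
  ring

end Votes

theorem stmt_18_general (n k : ℕ) (hk : k ≤ n + 1)
    (E E' : Finset (Fin n × Fin n)) :
    ((∃ R ≤ votes18 E E' k, Multiset.card R ≤ n * (n + 1) + k ∧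
        ∃ A : Multiset (Vote18 n), Multiset.card A = Multiset.card R ∧
          (∀ v ∈ A, v ∈ votes18 E E' k) ∧
          ∀ c : Cand18 n,
            flScore18 (votes18 E E' k - R + A) c ≤
              flScore18 (votes18 E E' k - R + A) (pC n))
      ↔ (∃ F ⊆ E,
          (∀ i : Fin n, (F.filter (fun e => e.1 = i)).card = 1) ∧
          (∀ j : Fin n, (F.filter (fun e => e.2 = j)).card = 1) ∧
          (F ∩ E').card = k))
    ∧ (∀ R ≤ votes18 E E' k, Multiset.card R ≤ n * (n + 1) + k →
        ∀ A : Multiset (Vote18 n), Multiset.card A = Multiset.card R →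
          (∀ v ∈ A, v ∈ votes18 E E' k) →
          (∀ c : Cand18 n,
            flScore18 (votes18 E E' k - R + A) c ≤
              flScore18 (votes18 E E' k - R + A) (pC n)) →
          R = Multiset.replicate (n * (n + 1) + k) (rC n, rhatC n)) := by
  refine ⟨⟨?_, ?_⟩, fun R _ hRcard A _ hA hwin =>
    (eq_replicate_of_forall_le_pC hRcard hA hwin).1⟩
  · rintro ⟨R, -, hRcard, A, hAR, hA, hwin⟩
    obtain ⟨rfl, hr⟩ := eq_replicate_of_forall_le_pC hRcard hA hwin
    rw [votes18_sub_replicate] at hwin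
    have hW : ∀ v ∈ baseVotes E E' + A, v ∈ votes18 E E' k := fun v hv =>
      (Multiset.mem_add.1 hv).elim (Multiset.mem_of_le (Multiset.le_add_right _ _)) (hA v)
    exact exists_matching_of_flScore18_eq_zero hk hA hr (by simpa using hAR)
      (flScore18_eq_zero_of_forall_le_pC hW hwin)
  · rintro ⟨F, hFE, hrow, hcol, hred⟩
    refine ⟨_, Multiset.le_add_left _ _, le_of_eq (Multiset.card_replicate _ _),
      F.val.bind (openChain E'), ?_, fun v hv => mem_votes18_of_mem_bind_openChain hFE hv,
      fun c => ?_⟩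
    · rw [card_bind_openChain hrow, hred, Multiset.card_replicate]
    · rw [votes18_sub_replicate, flScore18_baseVotes_add_bind_openChain hrow hcol,
        flScore18_baseVotes_add_bind_openChain hrow hcol]

/-- In the first-last conformant bribery construction (add
candidates `r`, `r̂` and `n(n+1)+k` voters `r > ⋯ > r̂` to the manipulation
construction, bribe limit `n(n+1)+k`): `p` can be made a first-last winner by
a conformant bribery of at most `n(n+1)+k` voters iff the graph has a perfect
matching with exactly `k` red edges; moreover, any successful conformant
bribery must change exactly the `n(n+1)+k` added `r`-voters. -/
theorem stmt_18 (n k : ℕ) (hn : 0 < n) (hk : k ≤ n + 1)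
    (E E' : Finset (Fin n × Fin n)) (hE' : E' ⊆ E) :
    ((∃ R ≤ votes18 E E' k, Multiset.card R ≤ n * (n + 1) + k ∧
        ∃ A : Multiset (Vote18 n), Multiset.card A = Multiset.card R ∧
          (∀ v ∈ A, v ∈ votes18 E E' k) ∧
          ∀ c : Cand18 n,
            flScore18 (votes18 E E' k - R + A) c ≤
              flScore18 (votes18 E E' k - R + A) (pC n))
      ↔ (∃ F ⊆ E,
          (∀ i : Fin n, (F.filter (fun e => e.1 = i)).card = 1) ∧
          (∀ j : Fin n, (F.filter (fun e => e.2 = j)).card = 1) ∧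
          (F ∩ E').card = k))
    ∧ (∀ R ≤ votes18 E E' k, Multiset.card R ≤ n * (n + 1) + k →
        ∀ A : Multiset (Vote18 n), Multiset.card A = Multiset.card R →
          (∀ v ∈ A, v ∈ votes18 E E' k) →
          (∀ c : Cand18 n,
            flScore18 (votes18 E E' k - R + A) c ≤
              flScore18 (votes18 E E' k - R + A) (pC n)) →
          R = Multiset.replicate (n * (n + 1) + k) (rC n, rhatC n)) :=
  stmt_18_general n k hk E E'
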